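/- arXiv:1908.06077 — 2 statements merged into one kernel-verified Lean document; each statement's English description precedes it below -/
import Mathlib

section
/- Let d ≥ 1 and s ≥ 1 be integers, let L = (l_0, l_1, …, l_{s+1}) be any sequence of quantization levels, and let v ∈ ℝ^d be nonzero. Then the variance of the nonuniform quantization of v satisfies E[‖Q_s(v) − v‖²] = ‖v‖² · Σ_{i=1}^d τ(r_i)² · p(r_i) · (1 − p(r_i)) = ‖v‖² · Σ_{i=1}^d (l_{ℓ(r_i)+1} − r_i)(r_i − l_{ℓ(r_i)}). -/
/-!
By linearity of expectation, and because each coordinate of the noise is uniform on `[0,1]`,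
the expected squared error is a sum of one-dimensional two-point expectations. Writing
`vᵢ = ‖v‖ · sign vᵢ · rᵢ`, the error in coordinate `i` is `‖v‖ (hᵢ - rᵢ)` up to sign, and `hᵢ`
takes the values `a = l_ℓ` and `b = l_{ℓ+1}` with probabilities chosen so that its mean is `rᵢ`;
hence its variance is `(b - rᵢ)(rᵢ - a) = (b - a)² p (1 - p)`.
-/

open MeasureTheory Real

noncomputable section

/-- The index of the quantization bin containing the normalized coordinate `r`. -/
def levIdx (l : ℕ → ℝ) (s : ℕ) (r : ℝ) : ℕ := sSup {j | j ≤ s ∧ l j ≤ r}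

/-- The probability of rounding the normalized coordinate `r` up to the next level. -/
def quantP (l : ℕ → ℝ) (s : ℕ) (r : ℝ) : ℝ :=
  (r - l (levIdx l s r)) / (l (levIdx l s r + 1) - l (levIdx l s r))

/-- The (random) nonuniform quantization of `v`, driven by the uniform noise vector `u`:
coordinate `i` is `‖v‖ · sign vᵢ · hᵢ`, where `hᵢ` is the upper adjacent level with
probability `p(rᵢ)` and the lower adjacent level otherwise. -/
def quant (l : ℕ → ℝ) (s : ℕ) {d : ℕ} (v : EuclideanSpace ℝ (Fin d))
    (u : Fin d → ℝ) : EuclideanSpace ℝ (Fin d) :=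
  WithLp.toLp 2 fun i =>
    ‖v‖ * Real.sign (v i) *
      (if u i ≤ quantP l s (|v i| / ‖v‖)
       then l (levIdx l s (|v i| / ‖v‖) + 1)
       else l (levIdx l s (|v i| / ‖v‖)))

/-- The uniform probability measure on the cube `[0,1]^d`, driving the quantization noise. -/
def unifCube (d : ℕ) : Measure (Fin d → ℝ) :=
  Measure.pi fun _ => volume.restrict (Set.Icc (0:ℝ) 1)

/-- `l` is a valid sequence of quantization levels `l 0 = 0 < l 1 < ⋯ < l (s+1) = 1`. -/
def IsLevels (l : ℕ → ℝ) (s : ℕ) : Prop :=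
  l 0 = 0 ∧ l (s+1) = 1 ∧ ∀ j ≤ s, l j < l (j+1)

open Set

instance : IsProbabilityMeasure (volume.restrict (Icc (0 : ℝ) 1)) := ⟨by simp⟩

instance (d : ℕ) : IsProbabilityMeasure (unifCube d) := by
  unfold unifCube; infer_instance

lemma integrable_ite_le {μ : Measure ℝ} [IsFiniteMeasure μ] (p A B : ℝ) :
    Integrable (fun x => if x ≤ p then A else B) μ :=
  Integrable.piecewise (s := Iic p) measurableSet_Iic (integrable_const A).integrableOn
    (integrable_const B).integrableOn

lemma integral_ite_le {μ : Measure ℝ} [IsProbabilityMeasure μ] (p A B : ℝ) :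
    ∫ x, (if x ≤ p then A else B) ∂μ = μ.real (Iic p) * A + (1 - μ.real (Iic p)) * B := by
  change ∫ x, (Iic p).piecewise (fun _ => A) (fun _ => B) x ∂μ = _
  rw [integral_piecewise measurableSet_Iic (integrable_const A).integrableOn
    (integrable_const B).integrableOn, setIntegral_const, setIntegral_const,
    probReal_compl_eq_one_sub measurableSet_Iic, smul_eq_mul, smul_eq_mul]

lemma volume_Icc_zero_one_real_Iic {p : ℝ} (hp : p ∈ Icc (0 : ℝ) 1) :
    (volume.restrict (Icc (0 : ℝ) 1)).real (Iic p) = p := by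
  have hinter : Iic p ∩ Icc 0 1 = Icc 0 p := by
    ext x; simp only [mem_inter_iff, mem_Iic, mem_Icc]; grind
  rw [measureReal_restrict_apply measurableSet_Iic, hinter, Real.volume_real_Icc_of_le hp.1,
    sub_zero]

lemma integral_unifCube_comp_ite_le {d : ℕ} (i : Fin d) {p : ℝ} (hp : p ∈ Icc (0 : ℝ) 1)
    (f : ℝ → ℝ) (a b : ℝ) :
    ∫ u, f (if u i ≤ p then b else a) ∂unifCube d = p * f b + (1 - p) * f a := by
  simp only [apply_ite f]
  rw [unifCube, integral_comp_eval (μ := fun _ => volume.restrict (Icc (0 : ℝ) 1))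
    (f := fun x => if x ≤ p then f b else f a) (integrable_ite_le p _ _).aestronglyMeasurable,
    integral_ite_le, volume_Icc_zero_one_real_Iic hp]

lemma integrable_unifCube_comp_ite_le {d : ℕ} (i : Fin d) (p : ℝ) (f : ℝ → ℝ) (a b : ℝ) :
    Integrable (fun u => f (if u i ≤ p then b else a)) (unifCube d) := by
  simp only [apply_ite f]
  exact integrable_comp_eval (μ := fun _ => volume.restrict (Icc (0 : ℝ) 1))
    (f := fun x => if x ≤ p then f b else f a) (integrable_ite_le p _ _)

namespace IsLevels

variable {l : ℕ → ℝ} {s : ℕ}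

lemma nonneg (hl : IsLevels l s) {j : ℕ} (hj : j ≤ s + 1) : 0 ≤ l j := by
  induction j with
  | zero => exact hl.1.ge
  | succ j ih => exact (ih (by omega)).trans (hl.2.2 j (by omega)).le

lemma levIdx_le_and_mem_Icc (hl : IsLevels l s) {r : ℝ} (hr : r ∈ Icc (0 : ℝ) 1) :
    levIdx l s r ≤ s ∧ r ∈ Icc (l (levIdx l s r)) (l (levIdx l s r + 1)) := by
  set S : Set ℕ := {j | j ≤ s ∧ l j ≤ r}
  have hbdd : BddAbove S := ⟨s, fun j hj => hj.1⟩
  obtain ⟨hle, hlow⟩ : levIdx l s r ∈ S := Nat.sSup_mem ⟨0, Nat.zero_le s, hl.1 ▸ hr.1⟩ hbdd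
  refine ⟨hle, hlow, ?_⟩
  rcases hle.eq_or_lt with hs | hlt
  · rw [hs, hl.2.1]; exact hr.2
  · by_contra! hup
    have : levIdx l s r + 1 ≤ levIdx l s r := le_csSup hbdd ⟨hlt, hup.le⟩
    omega

lemma quantP_mem_Icc (hl : IsLevels l s) {r : ℝ} (hr : r ∈ Icc (0 : ℝ) 1) :
    quantP l s r ∈ Icc (0 : ℝ) 1 := by
  obtain ⟨hle, hlow, hup⟩ := hl.levIdx_le_and_mem_Icc hr
  have hgap := sub_pos.mpr (hl.2.2 _ hle)
  exact ⟨div_nonneg (sub_nonneg.mpr hlow) hgap.le, (div_le_one hgap).mpr (by linarith)⟩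

end IsLevels

section Rounding

variable {a b r : ℝ}

lemma sq_sub_mul_div_mul_one_sub_div (hab : a ≠ b) :
    (b - a) ^ 2 * ((r - a) / (b - a)) * (1 - (r - a) / (b - a)) = (b - r) * (r - a) := by
  have : b - a ≠ 0 := sub_ne_zero.mpr hab.symm
  field_simp
  ring

lemma div_mul_sq_add_one_sub_div_mul_sq (hab : a ≠ b) :
    (r - a) / (b - a) * (b - r) ^ 2 + (1 - (r - a) / (b - a)) * (a - r) ^ 2 =
      (b - r) * (r - a) := by
  have : b - a ≠ 0 := sub_ne_zero.mpr hab.symm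
  field_simp
  ring

lemma sq_mul_sign_sub {N x : ℝ} (hN : N ≠ 0) (hx : x ≠ 0) (c : ℝ) :
    (N * Real.sign x * c - x) ^ 2 = N ^ 2 * (c - |x| / N) ^ 2 := by
  rcases hx.lt_or_gt with hneg | hpos
  · rw [Real.sign_of_neg hneg, abs_of_neg hneg]; field_simp; ring
  · rw [Real.sign_of_pos hpos, abs_of_pos hpos]; field_simp

lemma rounding_sq_error_eq {N x : ℝ} (hN : 0 < N) (ha : 0 ≤ a) (hab : a < b)
    (har : a ≤ |x| / N) :
    (|x| / N - a) / (b - a) * (N * Real.sign x * b - x) ^ 2 +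
        (1 - (|x| / N - a) / (b - a)) * (N * Real.sign x * a - x) ^ 2 =
      N ^ 2 * ((b - |x| / N) * (|x| / N - a)) := by
  rcases eq_or_ne x 0 with rfl | hx
  -- `sign 0 = 0` makes both errors vanish, while `0 ≤ a ≤ r = 0` makes the right side vanish
  · obtain rfl : a = 0 := le_antisymm (by simpa using har) ha
    simp
  · rw [sq_mul_sign_sub hN.ne' hx, sq_mul_sign_sub hN.ne' hx, ← div_mul_sq_add_one_sub_div_mul_sq
      hab.ne]
    ring

end Rounding

lemma abs_apply_div_norm_mem_Icc {ι : Type*} [Fintype ι] (v : EuclideanSpace ℝ ι) (i : ι) :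
    |v i| / ‖v‖ ∈ Icc (0 : ℝ) 1 :=
  ⟨by positivity, div_le_one_of_le₀ (by simpa using PiLp.norm_apply_le v i) (norm_nonneg v)⟩

lemma norm_quant_sub_sq (l : ℕ → ℝ) (s : ℕ) {d : ℕ} (v : EuclideanSpace ℝ (Fin d))
    (u : Fin d → ℝ) :
    ‖quant l s v u - v‖ ^ 2 = ∑ i, (‖v‖ * Real.sign (v i) *
      (if u i ≤ quantP l s (|v i| / ‖v‖) then l (levIdx l s (|v i| / ‖v‖) + 1)
        else l (levIdx l s (|v i| / ‖v‖))) - v i) ^ 2 :=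
  EuclideanSpace.real_norm_sq_eq _

lemma integral_sq_norm_quant_sub {d s : ℕ} {l : ℕ → ℝ} (hl : IsLevels l s)
    {v : EuclideanSpace ℝ (Fin d)} (hv : v ≠ 0) :
    ∫ u, ‖quant l s v u - v‖ ^ 2 ∂unifCube d =
      ‖v‖ ^ 2 * ∑ i, (l (levIdx l s (|v i| / ‖v‖) + 1) - |v i| / ‖v‖) *
        (|v i| / ‖v‖ - l (levIdx l s (|v i| / ‖v‖))) := by
  simp only [norm_quant_sub_sq]
  rw [integral_finsetSum _ fun i _ => integrable_unifCube_comp_ite_le i _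
    (fun h => (‖v‖ * Real.sign (v i) * h - v i) ^ 2) _ _, Finset.mul_sum]
  refine Finset.sum_congr rfl fun i _ => ?_
  have hr := abs_apply_div_norm_mem_Icc v i
  obtain ⟨hle, hlow, -⟩ := hl.levIdx_le_and_mem_Icc hr
  rw [integral_unifCube_comp_ite_le i (hl.quantP_mem_Icc hr)
    (fun h => (‖v‖ * Real.sign (v i) * h - v i) ^ 2), quantP]
  exact rounding_sq_error_eq (norm_pos_iff.mpr hv) (hl.nonneg (by omega)) (hl.2.2 _ hle) hlow

theorem variance_identity_general (d s : ℕ)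
    (l : ℕ → ℝ) (hl : IsLevels l s)
    (v : EuclideanSpace ℝ (Fin d)) (hv : v ≠ 0) :
    (∫ u, ‖quant l s v u - v‖ ^ 2 ∂(unifCube d)) =
      ‖v‖ ^ 2 * ∑ i, (l (levIdx l s (|v i| / ‖v‖) + 1) - l (levIdx l s (|v i| / ‖v‖))) ^ 2 *
        quantP l s (|v i| / ‖v‖) * (1 - quantP l s (|v i| / ‖v‖)) ∧
    (∫ u, ‖quant l s v u - v‖ ^ 2 ∂(unifCube d)) =
      ‖v‖ ^ 2 * ∑ i, (l (levIdx l s (|v i| / ‖v‖) + 1) - |v i| / ‖v‖) *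
        (|v i| / ‖v‖ - l (levIdx l s (|v i| / ‖v‖))) := by
  refine ⟨?_, integral_sq_norm_quant_sub hl hv⟩
  rw [integral_sq_norm_quant_sub hl hv]
  congr 1
  refine Finset.sum_congr rfl fun i _ => ?_
  have hgap := hl.2.2 _ (hl.levIdx_le_and_mem_Icc (abs_apply_div_norm_mem_Icc v i)).1
  exact (sq_sub_mul_div_mul_one_sub_div hgap.ne).symm

/-- **Variance identity for nonuniform quantization** (Lemma on the variance of `Q_s(v)`):
for any levels `L` and nonzero `v ∈ ℝ^d`,
`E[‖Q_s(v) − v‖²] = ‖v‖² Σᵢ τ(rᵢ)² p(rᵢ)(1 − p(rᵢ)) = ‖v‖² Σᵢ (l_{ℓ(rᵢ)+1} − rᵢ)(rᵢ − l_{ℓ(rᵢ)})`. -/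
theorem variance_identity (d s : ℕ) (hd : 1 ≤ d) (hs : 1 ≤ s)
    (l : ℕ → ℝ) (hl : IsLevels l s)
    (v : EuclideanSpace ℝ (Fin d)) (hv : v ≠ 0) :
    (∫ u, ‖quant l s v u - v‖ ^ 2 ∂(unifCube d)) =
      ‖v‖ ^ 2 * ∑ i, (l (levIdx l s (|v i| / ‖v‖) + 1) - l (levIdx l s (|v i| / ‖v‖))) ^ 2 *
        quantP l s (|v i| / ‖v‖) * (1 - quantP l s (|v i| / ‖v‖)) ∧
    (∫ u, ‖quant l s v u - v‖ ^ 2 ∂(unifCube d)) =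
      ‖v‖ ^ 2 * ∑ i, (l (levIdx l s (|v i| / ‖v‖) + 1) - |v i| / ‖v‖) *
        (|v i| / ‖v‖ - l (levIdx l s (|v i| / ‖v‖))) :=
  variance_identity_general d s l hl v hv
end
end

section
/- Let d ≥ 1 and s ≥ 1 be integers, let p ∈ (0,1), and let v ∈ ℝ^d be nonzero. The nonuniform quantization of v with the NUQSGD levels L̂ satisfies E[‖Q_s(v) − v‖²] ≤ (1/8 + K_p · 2^{(p−2)s} · d^{1−p/2}) · ‖v‖², where K_p = ((1/p)/(2/p − 1)) · ((1/p − 1)/(2/p − 1))^{1−p}. -/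
open MeasureTheory Real

noncomputable section

/-- The exponentially spaced NUQSGD levels `(0, 2^{-s}, 2^{1-s}, …, 2^{-1}, 1)`:
`l 0 = 0` and `l j = 2^{j-1-s}` for `j = 1, …, s+1`. -/
def nuqLevels (s : ℕ) : ℕ → ℝ :=
  fun j => if j = 0 then 0 else 2 ^ ((j : ℤ) - 1 - (s : ℤ))

/-!
Rounding `r ∈ [l_j, l_{j+1}]` to one of the endpoints with the unbiased probabilities has variance
`(r - l_j) (l_{j+1} - r)`, so `E ‖Q_s(v) - v‖² = ‖v‖² ∑ᵢ (rᵢ - l_j) (l_{j+1} - rᵢ)`.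
For the exponential levels a bin `[a, 2a]` contributes at most `r² / 8`, while the first bin
`[0, 2^{-s}]` contributes `r (2^{-s} - r) ≤ K_p 2^{(p-2)s} r^p`, because `K_p` is the maximum of
`x^{1-p} (1 - x)` on `[0, 1]` (weighted AM-GM). Summing, `∑ rᵢ² ≤ 1` and Hölder's inequality
`∑ rᵢ^p ≤ d^{1-p/2} (∑ rᵢ²)^{p/2}` give the bound.
-/

open Finset

section Levels

variable {l : ℕ → ℝ} {s : ℕ} {r : ℝ}

lemma levIdx_mem (h0 : l 0 ≤ r) : levIdx l s r ≤ s ∧ l (levIdx l s r) ≤ r :=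
  Nat.sSup_mem (s := {j | j ≤ s ∧ l j ≤ r}) ⟨0, Nat.zero_le s, h0⟩ ⟨s, fun _ hj => hj.1⟩

lemma le_level_levIdx_succ (h0 : l 0 ≤ r) (h1 : r ≤ l (s + 1)) :
    r ≤ l (levIdx l s r + 1) := by
  obtain ⟨hjs, -⟩ := levIdx_mem (s := s) h0
  rcases hjs.eq_or_lt with hj | hj
  · rwa [hj]
  · by_contra! hlt
    have : levIdx l s r + 1 ≤ levIdx l s r :=
      le_csSup (s := {j | j ≤ s ∧ l j ≤ r}) ⟨s, fun _ hk => hk.1⟩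
        (show levIdx l s r + 1 ≤ s ∧ _ from ⟨hj, hlt.le⟩)
    omega

lemma IsLevels.nonneg_s6 (hl : IsLevels l s) : ∀ {j}, j ≤ s + 1 → 0 ≤ l j
  | 0, _ => hl.1.ge
  | j + 1, hj => (hl.nonneg_s6 (by omega)).trans (hl.2.2 j (by omega)).le

end Levels

lemma rpow_mul_one_sub_le {a x : ℝ} (ha : 0 < a) (hx0 : 0 ≤ x) (hx1 : x ≤ 1) :
    x ^ a * (1 - x) ≤ (a / (a + 1)) ^ a / (a + 1) := by
  have hb : 0 < a + 1 := by linarith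
  set α := a / (a + 1) with hα_def
  set β := 1 / (a + 1) with hβ_def
  have hα : 0 < α := by positivity
  have hβ : 0 < β := by positivity
  have amgm : (x / α) ^ α * ((1 - x) / β) ^ β ≤ 1 := by
    have := geom_mean_le_arith_mean2_weighted hα.le hβ.le (div_nonneg hx0 hα.le)
      (div_nonneg (sub_nonneg.2 hx1) hβ.le) (by rw [hα_def, hβ_def]; field_simp)
    rwa [mul_div_cancel₀ _ hα.ne', mul_div_cancel₀ _ hβ.ne', add_sub_cancel] at this
  have key : (x / α) ^ a * ((1 - x) / β) ≤ 1 := by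
    have h := rpow_le_one (by positivity) amgm hb.le
    rwa [mul_rpow (by positivity) (by positivity), ← rpow_mul (by positivity),
      ← rpow_mul (by positivity), div_mul_cancel₀ _ hb.ne', hβ_def, one_div_mul_cancel hb.ne',
      rpow_one] at h
  rw [div_rpow hx0 hα.le] at key
  have hαa : 0 < α ^ a := by positivity
  calc x ^ a * (1 - x) = (x ^ a / α ^ a * ((1 - x) / β)) * (α ^ a * β) := by
        field_simp
    _ ≤ 1 * (α ^ a * β) := by gcongr
    _ = α ^ a / (a + 1) := by rw [one_mul, hβ_def, mul_one_div]

lemma sum_rpow_le_card_rpow_mul {ι : Type*} (t : Finset ι) {f : ι → ℝ} (hf : ∀ i ∈ t, 0 ≤ f i)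
    {p : ℝ} (hp0 : 0 < p) (hp2 : p < 2) :
    ∑ i ∈ t, f i ^ p ≤ (#t : ℝ) ^ (1 - p / 2) * (∑ i ∈ t, f i ^ 2) ^ (p / 2) := by
  have h2p : 0 < 2 - p := by linarith
  have hpq : Real.HolderConjugate (2 / (2 - p)) (2 / p) :=
    ⟨by field_simp; ring, by positivity, by positivity⟩
  have holder := inner_le_Lp_mul_Lq_of_nonneg t hpq (f := fun _ => 1) (g := fun i => f i ^ p)
    (fun _ _ => zero_le_one) (fun i hi => rpow_nonneg (hf i hi) p)
  have hsq : ∀ i ∈ t, (f i ^ p) ^ (2 / p) = f i ^ 2 := fun i hi => by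
    rw [← rpow_mul (hf i hi), mul_div_cancel₀ _ hp0.ne', rpow_two]
  rw [sum_congr rfl hsq, one_div_div, one_div_div, show (2 - p) / 2 = 1 - p / 2 by ring] at holder
  simpa using holder

def nuqK (p : ℝ) : ℝ := (1 / p) / (2 / p - 1) * ((1 / p - 1) / (2 / p - 1)) ^ (1 - p)

lemma nuqK_eq {p : ℝ} (hp0 : p ≠ 0) (hp2 : p ≠ 2) :
    nuqK p = ((1 - p) / (2 - p)) ^ (1 - p) / (2 - p) := by
  have h2p : 2 - p ≠ 0 := sub_ne_zero.2 hp2.symm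
  have h1 : (1 / p) / (2 / p - 1) = 1 / (2 - p) := by field_simp
  have h2 : (1 / p - 1) / (2 / p - 1) = (1 - p) / (2 - p) := by field_simp
  rw [nuqK, h1, h2, one_div_mul_eq_div]

lemma nuqK_pos {p : ℝ} (hp0 : 0 < p) (hp1 : p < 1) : 0 < nuqK p := by
  have h2p : 0 < 2 - p := by linarith
  rw [nuqK_eq hp0.ne' (by linarith)]
  positivity

lemma mul_sub_le_nuqK_mul {p m r : ℝ} (hp0 : 0 < p) (hp1 : p < 1) (hm : 0 < m) (hr0 : 0 ≤ r)
    (hrm : r ≤ m) : r * (m - r) ≤ nuqK p * m ^ (2 - p) * r ^ p := by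
  set x := r / m with hx_def
  have hx0 : 0 ≤ x := by positivity
  have hmax : x ^ (1 - p) * (1 - x) ≤ nuqK p := by
    rw [nuqK_eq hp0.ne' (by linarith)]
    simpa only [show 1 - p + 1 = 2 - p by ring]
      using rpow_mul_one_sub_le (sub_pos.2 hp1) hx0 (div_le_one_of_le₀ hrm hm.le)
  have hr : r = m * x := by rw [hx_def]; field_simp
  have hm2 : m ^ (2 - p) * m ^ p = m ^ 2 := by rw [← rpow_add hm]; norm_num
  have hx1 : x ^ p * x ^ (1 - p) = x := by rw [← rpow_add' hx0 (by norm_num)]; norm_num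
  calc r * (m - r) = m ^ (2 - p) * r ^ p * (x ^ (1 - p) * (1 - x)) := by
        rw [hr, mul_rpow hm.le hx0]
        linear_combination (-(x ^ p * x ^ (1 - p)) * (1 - x)) * hm2 - m ^ 2 * (1 - x) * hx1
    _ ≤ m ^ (2 - p) * r ^ p * nuqK p := by gcongr
    _ = nuqK p * m ^ (2 - p) * r ^ p := by ring

lemma nuqLevels_zero (s : ℕ) : nuqLevels s 0 = 0 := if_pos rfl

lemma nuqLevels_one (s : ℕ) : nuqLevels s 1 = 2 ^ (-(s : ℝ)) := by
  simp [nuqLevels]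

lemma nuqLevels_succ (s : ℕ) {j : ℕ} (hj : j ≠ 0) : nuqLevels s (j + 1) = 2 * nuqLevels s j := by
  simp only [nuqLevels, if_neg hj, Nat.succ_ne_zero, if_false]
  rw [← zpow_one_add₀ two_ne_zero]
  push_cast
  ring_nf

lemma isLevels_nuqLevels (s : ℕ) : IsLevels (nuqLevels s) s := by
  refine ⟨nuqLevels_zero s, by simp [nuqLevels], fun j _ => ?_⟩
  rcases eq_or_ne j 0 with rfl | hj
  · rw [nuqLevels_zero, nuqLevels_one]
    positivity
  · have : 0 < nuqLevels s j := by simp only [nuqLevels, if_neg hj]; positivity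
    rw [nuqLevels_succ s hj]
    linarith

def roundingVariance (l : ℕ → ℝ) (s : ℕ) (r : ℝ) : ℝ :=
  (r - l (levIdx l s r)) * (l (levIdx l s r + 1) - r)

lemma roundingVariance_nuqLevels_le {s : ℕ} {p r : ℝ} (hp0 : 0 < p) (hp1 : p < 1)
    (hr0 : 0 ≤ r) (hr1 : r ≤ 1) :
    roundingVariance (nuqLevels s) s r ≤ r ^ 2 / 8 + nuqK p * 2 ^ ((p - 2) * s) * r ^ p := by
  have hl := isLevels_nuqLevels s
  have hlo := (levIdx_mem (s := s) (hl.1.trans_le hr0)).2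
  have hhi := le_level_levIdx_succ (hl.1.trans_le hr0) (hr1.trans_eq hl.2.1.symm)
  have hK : 0 ≤ nuqK p * 2 ^ ((p - 2) * s) * r ^ p := by
    have := nuqK_pos hp0 hp1
    positivity
  rw [roundingVariance]
  rcases eq_or_ne (levIdx (nuqLevels s) s r) 0 with hj | hj
  · rw [hj, zero_add, nuqLevels_one] at hhi ⊢
    rw [nuqLevels_zero]
    have hsmall := mul_sub_le_nuqK_mul hp0 hp1 (by positivity) hr0 hhi
    rw [← rpow_mul zero_le_two, show -(s : ℝ) * (2 - p) = (p - 2) * s by ring] at hsmall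
    nlinarith
  · -- `r ^ 2 / 8 - (r - a) * (2 * a - r) = (3 * r - 4 * a) ^ 2 / 8`
    rw [nuqLevels_succ s hj]
    nlinarith [sq_nonneg (3 * r - 4 * nuqLevels s (levIdx (nuqLevels s) s r))]

instance : IsProbabilityMeasure (volume.restrict (Set.Icc (0 : ℝ) 1)) := ⟨by simp⟩

instance inst_s6 (d : ℕ) : IsProbabilityMeasure (unifCube d) := by
  rw [unifCube]
  infer_instance

section Noise

variable {d : ℕ} (i : Fin d) {P : ℝ} (a b : ℝ)

lemma integrable_unifCube_ite : Integrable (fun u => if u i ≤ P then a else b) (unifCube d) :=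
  integrable_comp_eval (μ := fun _ => volume.restrict (Set.Icc (0 : ℝ) 1)) (i := i)
    (Integrable.piecewise measurableSet_Iic (integrable_const a).integrableOn
      (integrable_const b).integrableOn)

lemma integral_unifCube_ite (hP0 : 0 ≤ P) (hP1 : P ≤ 1) :
    ∫ u, (if u i ≤ P then a else b) ∂unifCube d = P * a + (1 - P) * b := by
  have hIic : (volume.restrict (Set.Icc (0 : ℝ) 1)).real (Set.Iic P) = P := by
    rw [measureReal_restrict_apply measurableSet_Iic,
      show Set.Iic P ∩ Set.Icc 0 1 = Set.Icc 0 P from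
        Set.ext fun t => ⟨fun h => ⟨h.2.1, h.1⟩, fun h => ⟨h.2, h.1, h.2.trans hP1⟩⟩,
      Real.volume_real_Icc_of_le hP0, sub_zero]
  refine (integral_comp_eval (μ := fun _ => volume.restrict (Set.Icc (0 : ℝ) 1)) (i := i)
    (measurable_const.piecewise measurableSet_Iic measurable_const).aestronglyMeasurable).trans ?_
  rw [integral_piecewise measurableSet_Iic (integrable_const a).integrableOn
      (integrable_const b).integrableOn, setIntegral_const, setIntegral_const,
    probReal_compl_eq_one_sub measurableSet_Iic, hIic, smul_eq_mul, smul_eq_mul]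

end Noise

lemma mul_sign_mul_abs_div {x n : ℝ} (h : |x| ≤ n) : n * sign x * (|x| / n) = x := by
  rcases lt_trichotomy x 0 with hx | rfl | hx
  · have hn : n ≠ 0 := ((abs_pos.2 hx.ne).trans_le h).ne'
    rw [sign_of_neg hx, abs_of_neg hx]
    field_simp
  · simp
  · have hn : n ≠ 0 := ((abs_pos.2 hx.ne').trans_le h).ne'
    rw [sign_of_pos hx, abs_of_pos hx]
    field_simp

lemma abs_apply_div_norm_le_one {ι : Type*} [Fintype ι] (v : EuclideanSpace ℝ ι) (i : ι) :
    |v i| / ‖v‖ ≤ 1 :=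
  div_le_one_of_le₀ (PiLp.norm_apply_le v i) (norm_nonneg v)

lemma sum_sq_abs_div_norm_le_one {ι : Type*} [Fintype ι] (v : EuclideanSpace ℝ ι) :
    ∑ i, (|v i| / ‖v‖) ^ 2 ≤ 1 := by
  simp only [div_pow, sq_abs, ← sum_div, ← EuclideanSpace.real_norm_sq_eq]
  exact div_self_le_one _

lemma sum_rpow_abs_div_norm_le {ι : Type*} [Fintype ι] (v : EuclideanSpace ℝ ι) {p : ℝ}
    (hp0 : 0 < p) (hp2 : p < 2) :
    ∑ i, (|v i| / ‖v‖) ^ p ≤ Fintype.card ι ^ (1 - p / 2) :=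
  calc ∑ i, (|v i| / ‖v‖) ^ p
      ≤ Fintype.card ι ^ (1 - p / 2) * (∑ i, (|v i| / ‖v‖) ^ 2) ^ (p / 2) := by
        simpa using sum_rpow_le_card_rpow_mul univ (fun i _ => by positivity) hp0 hp2
    _ ≤ Fintype.card ι ^ (1 - p / 2) := mul_le_of_le_one_right (by positivity)
        (rpow_le_one (by positivity) (sum_sq_abs_div_norm_le_one v) (by positivity))

lemma bernoulli_rounding_variance {a b r : ℝ} (hab : a < b) :
    (r - a) / (b - a) * (b - r) ^ 2 + (1 - (r - a) / (b - a)) * (a - r) ^ 2 =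
      (r - a) * (b - r) := by
  have : b - a ≠ 0 := (sub_pos.2 hab).ne'
  field_simp
  ring

section Quantization

variable {l : ℕ → ℝ} {s d : ℕ}

lemma integral_sq_quant_apply_sub (hl : IsLevels l s) (v : EuclideanSpace ℝ (Fin d))
    (i : Fin d) :
    Integrable (fun u => (quant l s v u i - v i) ^ 2) (unifCube d) ∧
      ∫ u, (quant l s v u i - v i) ^ 2 ∂unifCube d =
        ‖v‖ ^ 2 * roundingVariance l s (|v i| / ‖v‖) := by
  set r := |v i| / ‖v‖ with hr_def
  set j := levIdx l s r with hj_def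
  set c := ‖v‖ * sign (v i)
  have hr0 : l 0 ≤ r := hl.1 ▸ by positivity
  have hr1 : r ≤ l (s + 1) := hl.2.1 ▸ abs_apply_div_norm_le_one v i
  obtain ⟨hjs, hlo⟩ := levIdx_mem (s := s) hr0
  have hhi := le_level_levIdx_succ hr0 hr1
  have hlt := hl.2.2 j hjs
  have hcr : c * r = v i := mul_sign_mul_abs_div (PiLp.norm_apply_le v i)
  have hP0 : 0 ≤ quantP l s r := div_nonneg (by linarith) (by linarith)
  have hP1 : quantP l s r ≤ 1 := div_le_one_of_le₀ (by linarith) (by linarith)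
  have hsq : (fun u => (quant l s v u i - v i) ^ 2) = fun u =>
      c ^ 2 * if u i ≤ quantP l s r then (l (j + 1) - r) ^ 2 else (l j - r) ^ 2 := by
    have hq : ∀ u, quant l s v u i = c * if u i ≤ quantP l s r then l (j + 1) else l j :=
      fun _ => rfl
    funext u
    rw [hq, ← hcr]
    split_ifs <;> ring
  have hc : c ^ 2 * ((r - l j) * (l (j + 1) - r)) =
      ‖v‖ ^ 2 * ((r - l j) * (l (j + 1) - r)) := by
    rcases eq_or_ne (v i) 0 with h0 | h0
    · have hr : r = 0 := by simp [hr_def, h0]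
      have hj : l j = 0 := le_antisymm (hr ▸ hlo) (hl.nonneg_s6 (by omega))
      rw [hr, hj]
      ring
    · rcases sign_apply_eq_of_ne_zero _ h0 with h | h <;> simp [c, h]
  refine ⟨hsq ▸ (integrable_unifCube_ite i _ _).const_mul _, ?_⟩
  rw [hsq, integral_const_mul, integral_unifCube_ite i _ _ hP0 hP1, quantP, ← hj_def,
    bernoulli_rounding_variance hlt, hc, roundingVariance]

lemma integral_norm_quant_sub_sq (hl : IsLevels l s) (v : EuclideanSpace ℝ (Fin d)) :
    ∫ u, ‖quant l s v u - v‖ ^ 2 ∂unifCube d =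
      ‖v‖ ^ 2 * ∑ i, roundingVariance l s (|v i| / ‖v‖) := by
  have h := integral_sq_quant_apply_sub hl v
  simp only [EuclideanSpace.real_norm_sq_eq (quant l s v _ - v), PiLp.sub_apply]
  rw [integral_finsetSum _ fun i _ => (h i).1, mul_sum]
  exact sum_congr rfl fun i _ => (h i).2

end Quantization

theorem nuq_variance_bound_Kp_general (d s : ℕ)
    (p : ℝ) (hp0 : 0 < p) (hp1 : p < 1)
    (v : EuclideanSpace ℝ (Fin d)) :
    (∫ u, ‖quant (nuqLevels s) s v u - v‖ ^ 2 ∂(unifCube d)) ≤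
      (1 / 8 +
        ((1 / p) / (2 / p - 1)) * ((1 / p - 1) / (2 / p - 1)) ^ (1 - p) *
          (2:ℝ) ^ ((p - 2) * s) * (d:ℝ) ^ (1 - p / 2)) * ‖v‖ ^ 2 := by
  change _ ≤ (1 / 8 + nuqK p * 2 ^ ((p - 2) * s) * d ^ (1 - p / 2)) * ‖v‖ ^ 2
  rw [integral_norm_quant_sub_sq (isLevels_nuqLevels s), mul_comm _ (‖v‖ ^ 2)]
  set r : Fin d → ℝ := fun i => |v i| / ‖v‖
  have hK : 0 ≤ nuqK p * 2 ^ ((p - 2) * s) := by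
    have := nuqK_pos hp0 hp1
    positivity
  calc ‖v‖ ^ 2 * ∑ i, roundingVariance (nuqLevels s) s (r i)
      ≤ ‖v‖ ^ 2 * ∑ i, (r i ^ 2 / 8 + nuqK p * 2 ^ ((p - 2) * s) * r i ^ p) := by
        gcongr with i
        exact roundingVariance_nuqLevels_le hp0 hp1 (by positivity) (abs_apply_div_norm_le_one v i)
    _ = ‖v‖ ^ 2 * ((∑ i, r i ^ 2) / 8 + nuqK p * 2 ^ ((p - 2) * s) * ∑ i, r i ^ p) := by
        rw [sum_add_distrib, sum_div, mul_sum]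
    _ ≤ ‖v‖ ^ 2 * (1 / 8 + nuqK p * 2 ^ ((p - 2) * s) * d ^ (1 - p / 2)) := by
        gcongr
        · exact sum_sq_abs_div_norm_le_one v
        · simpa using sum_rpow_abs_div_norm_le v hp0 (by linarith)

/-- **Variance bound in terms of `K_p`** (equation (18)): for the NUQSGD levels and any
`p ∈ (0,1)`, `E[‖Q_s(v) − v‖²] ≤ (1/8 + K_p 2^{(p−2)s} d^{1−p/2}) ‖v‖²` where
`K_p = ((1/p)/(2/p − 1)) ((1/p − 1)/(2/p − 1))^{1−p}`. -/
theorem nuq_variance_bound_Kp (d s : ℕ) (hd : 1 ≤ d) (hs : 1 ≤ s)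
    (p : ℝ) (hp0 : 0 < p) (hp1 : p < 1)
    (v : EuclideanSpace ℝ (Fin d)) (hv : v ≠ 0) :
    (∫ u, ‖quant (nuqLevels s) s v u - v‖ ^ 2 ∂(unifCube d)) ≤
      (1 / 8 +
        ((1 / p) / (2 / p - 1)) * ((1 / p - 1) / (2 / p - 1)) ^ (1 - p) *
          (2:ℝ) ^ ((p - 2) * s) * (d:ℝ) ^ (1 - p / 2)) * ‖v‖ ^ 2 :=
  nuq_variance_bound_Kp_general d s p hp0 hp1 v
end
end
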